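/- arXiv:1002.0777 — 2 statements merged into one kernel-verified Lean document; each statement's English description precedes it below -/
import Mathlib

section
/- Let X[1],…,X[m] be mutually independent random variables with values in finite alphabets, and let Y be the output of a multiple access channel on input X[E_m] = (X[1],…,X[m]). Then the function ρ : 2^{E_m} → ℝ defined by ρ(S) = I(X[S]; Y, X[S^c]) is a polymatroid rank function: ρ(∅) = 0, ρ(J) ≤ ρ(K) whenever J ⊆ K ⊆ E_m, and ρ(J ∪ K) + ρ(J ∩ K) ≤ ρ(J) + ρ(K) for all J, K ⊆ E_m. -/
/-!
Polar codes for the m-user MAC (Abbe–Telatar), Statement 5: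
For mutually independent inputs `X[1], …, X[m]` with values in finite alphabets and a MAC
output `Y`, the function `ρ(S) = I(X[S]; Y, X[Sᶜ])` is a polymatroid rank function:
`ρ(∅) = 0`, `ρ` is monotone under inclusion, and `ρ` is submodular.
-/

/-- Binary (base 2) Shannon entropy of a finitely supported distribution. -/
noncomputable def H2 {Ω : Type*} [Fintype Ω] (p : Ω → ℝ) : ℝ :=
  -∑ ω, p ω * Real.logb 2 (p ω)

open scoped Classical in
/-- Marginal distribution of the push-forward of `p` under `f`. -/
noncomputable def marg {Ω A : Type*} [Fintype Ω] (p : Ω → ℝ) (f : Ω → A) (a : A) : ℝ :=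
  ∑ ω, if f ω = a then p ω else 0

/-- Mutual information (in bits) between `f` and `g` under the joint distribution `p`. -/
noncomputable def mi {Ω A B : Type*} [Fintype Ω] [Fintype A] [Fintype B]
    (p : Ω → ℝ) (f : Ω → A) (g : Ω → B) : ℝ :=
  H2 (marg p f) + H2 (marg p g) - H2 (marg p fun ω => (f ω, g ω))

/-- `W` is a bona fide transition probability kernel (channel), `W x y = P(y | x)`. -/
def IsChannel {α Y : Type*} [Fintype Y] (W : α → Y → ℝ) : Prop :=
  (∀ x y, 0 ≤ W x y) ∧ ∀ x, ∑ y, W x y = 1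

/-- Joint law of `(X[E_m], Y)` where the inputs `X[i] ∼ p i` are mutually independent and
`Y` is the output of the MAC `W` on input `X[E_m]`. -/
noncomputable def macJoint {m : ℕ} {𝒳 : Fin m → Type*} {Y : Type*}
    (p : ∀ i, 𝒳 i → ℝ) (W : (∀ i, 𝒳 i) → Y → ℝ) : (∀ i, 𝒳 i) × Y → ℝ :=
  fun q => (∏ i, p i (q.1 i)) * W q.1 q.2

/-- `ρ(S) = I(X[S]; Y, X[Sᶜ])`. -/
noncomputable def macRho {m : ℕ} {𝒳 : Fin m → Type*} [∀ i, Fintype (𝒳 i)] {Y : Type*}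
    [Fintype Y] (p : ∀ i, 𝒳 i → ℝ) (W : (∀ i, 𝒳 i) → Y → ℝ) (S : Finset (Fin m)) : ℝ :=
  mi (macJoint p W) (fun q => fun i : {i // i ∈ S} => q.1 i.1)
    (fun q => (q.2, fun i : {i // i ∈ Sᶜ} => q.1 i.1))

/-
Let `P` be the joint law of `(X, Y)`. Since `(X[S], (Y, X[Sᶜ]))` is a relabelling of `(X, Y)`,
`ρ(S) = H(X[S]) + H(Y, X[Sᶜ]) - H(X, Y)`. Independence of the inputs makes the first term modular,
`H(X[S]) = ∑_{i ∈ S} H(X[i])`, while `T ↦ H(Y, X[T])` is subadditive and submodular by Shannon's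
inequality `H(f, g, h) + H(h) ≤ H(f, h) + H(g, h)`, itself Gibbs' inequality `log x ≤ x - 1`
against the law under which `f` and `g` are conditionally independent given `h`. Taking `T = Sᶜ`
gives monotonicity and submodularity of `ρ`.
-/

open Real

section Marginal

open scoped Classical

variable {Ω A B : Type*} [Fintype Ω]

lemma sum_marg_mul [Fintype A] (P : Ω → ℝ) (F : Ω → A) (g : A → ℝ) :
    ∑ a, marg P F a * g a = ∑ ω, P ω * g (F ω) := by
  simp only [marg, Finset.sum_mul, ite_mul, zero_mul]
  rw [Finset.sum_comm]
  simp

lemma sum_marg [Fintype A] (P : Ω → ℝ) (F : Ω → A) : ∑ a, marg P F a = ∑ ω, P ω := by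
  simpa using sum_marg_mul P F 1

lemma marg_id (P : Ω → ℝ) : marg P id = P := by
  ext ω; simp [marg]

lemma marg_comp [Fintype A] (P : Ω → ℝ) (F : Ω → A) (g : A → B) :
    marg P (fun ω => g (F ω)) = marg (marg P F) g := by
  ext b
  have h := sum_marg_mul P F fun a => if g a = b then 1 else 0
  simp only [mul_ite, mul_one, mul_zero] at h
  exact h.symm

lemma marg_apply_congr (P : Ω → ℝ) {F : Ω → A} {G : Ω → B} {ω₀ : Ω}
    (h : ∀ ω, F ω = F ω₀ ↔ G ω = G ω₀) : marg P F (F ω₀) = marg P G (G ω₀) :=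
  Finset.sum_congr rfl fun ω _ => if_congr (h ω) rfl rfl

lemma le_marg_self {P : Ω → ℝ} (hP : ∀ ω, 0 ≤ P ω) (F : Ω → A) (ω : Ω) :
    P ω ≤ marg P F (F ω) := by
  unfold marg
  simpa using Finset.single_le_sum (f := fun ω' => if F ω' = F ω then P ω' else 0)
    (fun ω' _ => by split_ifs <;> simp [hP]) (Finset.mem_univ ω)

lemma marg_apply_pos {P : Ω → ℝ} (hP : ∀ ω, 0 ≤ P ω) (F : Ω → A) {ω : Ω}
    (hω : 0 < P ω) : 0 < marg P F (F ω) :=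
  hω.trans_le (le_marg_self hP F ω)

lemma marg_nonneg {P : Ω → ℝ} (hP : ∀ ω, 0 ≤ P ω) (F : Ω → A) (a : A) :
    0 ≤ marg P F a :=
  Finset.sum_nonneg fun ω _ => by split_ifs <;> simp [hP]

lemma sum_marg_pair_fst [Fintype A] (P : Ω → ℝ) (F : Ω → A) (G : Ω → B) (b : B) :
    ∑ a, marg P (fun ω => (F ω, G ω)) (a, b) = marg P G b := by
  simp only [marg, Prod.ext_iff]
  rw [Finset.sum_comm]
  simp [ite_and]

end Marginal

section Entropy

variable {Ω A B : Type*} [Fintype Ω] [Fintype A] [Fintype B]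

lemma H2_marg_eq (P : Ω → ℝ) (F : Ω → A) :
    H2 (marg P F) = -∑ ω, P ω * logb 2 (marg P F (F ω)) := by
  rw [H2, sum_marg_mul P F fun a => logb 2 (marg P F a)]

lemma H2_marg_congr (P : Ω → ℝ) {F : Ω → A} {G : Ω → B}
    (h : ∀ ω ω', F ω = F ω' ↔ G ω = G ω') : H2 (marg P F) = H2 (marg P G) := by
  simp only [H2_marg_eq, marg_apply_congr P (h · _)]

lemma H2_marg_of_injective (P : Ω → ℝ) {F : Ω → A} (hF : F.Injective) :
    H2 (marg P F) = H2 P := by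
  rw [H2_marg_congr P (F := F) (G := id) fun _ _ => hF.eq_iff, marg_id]

lemma H2_marg_const {P : Ω → ℝ} (hP : ∑ ω, P ω = 1) : H2 (marg P fun _ => ()) = 0 := by
  simp [H2, marg, hP]

end Entropy

section Submodular

variable {Ω A B C : Type*} [Fintype Ω] [Fintype A] [Fintype B] [Fintype C]
  {P : Ω → ℝ}

/- The sum is the mass, on the support of `((f, h), g)`, of the law `P(f, h) P(g, h) / P(h)`
under which `f` and `g` are conditionally independent given `h`. -/
lemma sum_mul_marg_ratio_le_one (hP0 : ∀ ω, 0 ≤ P ω) (hP1 : ∑ ω, P ω = 1)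
    (f : Ω → A) (g : Ω → B) (h : Ω → C) :
    ∑ ω, P ω * (marg P (fun ω => (f ω, h ω)) (f ω, h ω)
        * marg P (fun ω => (g ω, h ω)) (g ω, h ω)
        / (marg P (fun ω => ((f ω, h ω), g ω)) ((f ω, h ω), g ω) * marg P h (h ω))) ≤ 1 := by
  set mfh := marg P fun ω => (f ω, h ω)
  set mgh := marg P fun ω => (g ω, h ω)
  set mh := marg P h
  set m := marg P fun ω => ((f ω, h ω), g ω)
  let k : (A × C) × B → ℝ := fun x => mfh x.1 * mgh (x.2, x.1.2) / mh x.1.2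
  have hk : ∀ x, 0 ≤ k x := fun x =>
    div_nonneg (mul_nonneg (marg_nonneg hP0 _ _) (marg_nonneg hP0 _ _)) (marg_nonneg hP0 _ _)
  calc ∑ ω, P ω * (mfh (f ω, h ω) * mgh (g ω, h ω) / (m ((f ω, h ω), g ω) * mh (h ω)))
      = ∑ x, m x * (k x / m x) := by
        rw [sum_marg_mul P _ fun x => k x / m x]
        simp only [k, div_div, mul_comm (mh _)]
    _ ≤ ∑ x, k x := by
        refine Finset.sum_le_sum fun x _ => ?_
        rcases eq_or_ne (m x) 0 with h0 | h0
        · simp [h0, hk x]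
        · rw [mul_div_cancel₀ _ h0]
    _ = ∑ y : A × C, mfh y * ((∑ b, mgh (b, y.2)) / mh y.2) := by
        rw [Fintype.sum_prod_type]
        simp only [k, Finset.mul_sum, Finset.sum_div, mul_div_assoc]
    _ ≤ ∑ y, mfh y := by
        refine Finset.sum_le_sum fun y _ => ?_
        rw [sum_marg_pair_fst]
        exact mul_le_of_le_one_right (marg_nonneg hP0 _ _) (div_self_le_one _)
    _ = 1 := by rw [sum_marg, hP1]

lemma logb_two_le_sub_one_div {x : ℝ} (hx : 0 < x) : logb 2 x ≤ (x - 1) / log 2 :=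
  div_le_div_of_nonneg_right (log_le_sub_one_of_pos hx) (log_nonneg one_le_two)

lemma H2_marg_submodular (hP0 : ∀ ω, 0 ≤ P ω) (hP1 : ∑ ω, P ω = 1)
    (f : Ω → A) (g : Ω → B) (h : Ω → C) :
    H2 (marg P fun ω => ((f ω, h ω), g ω)) + H2 (marg P h)
      ≤ H2 (marg P fun ω => (f ω, h ω)) + H2 (marg P fun ω => (g ω, h ω)) := by
  have ratio := sum_mul_marg_ratio_le_one hP0 hP1 f g h
  simp only [H2_marg_eq]
  set mfh := marg P fun ω => (f ω, h ω)
  set mgh := marg P fun ω => (g ω, h ω)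
  set mh := marg P h
  set m := marg P fun ω => ((f ω, h ω), g ω)
  -- Gibbs' inequality, pointwise: `log x ≤ x - 1` at the ratio summed in `ratio`.
  have pointwise : ∀ ω, P ω * (logb 2 (mfh (f ω, h ω)) + logb 2 (mgh (g ω, h ω))
      - logb 2 (m ((f ω, h ω), g ω)) - logb 2 (mh (h ω)))
      ≤ (P ω * (mfh (f ω, h ω) * mgh (g ω, h ω) / (m ((f ω, h ω), g ω) * mh (h ω))) - P ω)
        / log 2 := by
    intro ω
    rcases (hP0 ω).eq_or_lt with hω | hω
    · simp [← hω]
    have hfh : 0 < mfh (f ω, h ω) := marg_apply_pos hP0 _ hω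
    have hgh : 0 < mgh (g ω, h ω) := marg_apply_pos hP0 _ hω
    have hh : 0 < mh (h ω) := marg_apply_pos hP0 _ hω
    have hfgh : 0 < m ((f ω, h ω), g ω) := marg_apply_pos hP0 _ hω
    rw [← logb_mul hfh.ne' hgh.ne', sub_sub, ← logb_mul hfgh.ne' hh.ne',
      ← logb_div (by positivity) (by positivity)]
    have hlog := logb_two_le_sub_one_div (div_pos (mul_pos hfh hgh) (mul_pos hfgh hh))
    refine (mul_le_mul_of_nonneg_left hlog hω.le).trans_eq ?_
    ring
  have total := Finset.sum_le_sum fun ω (_ : ω ∈ Finset.univ) => pointwise ω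
  rw [← Finset.sum_div, Finset.sum_sub_distrib, hP1] at total
  have : (∑ ω, P ω * (mfh (f ω, h ω) * mgh (g ω, h ω) / (m ((f ω, h ω), g ω) * mh (h ω)))
      - 1) / log 2 ≤ 0 := div_nonpos_of_nonpos_of_nonneg (by linarith) (log_nonneg one_le_two)
  simp only [mul_sub, mul_add, Finset.sum_sub_distrib, Finset.sum_add_distrib] at total
  linarith

lemma H2_marg_pair_le_add (hP0 : ∀ ω, 0 ≤ P ω) (hP1 : ∑ ω, P ω = 1) (f : Ω → A) (g : Ω → B) :
    H2 (marg P fun ω => (f ω, g ω)) ≤ H2 (marg P f) + H2 (marg P g) := by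
  have h := H2_marg_submodular hP0 hP1 f g fun _ => ()
  rwa [H2_marg_const hP1, add_zero,
    H2_marg_congr P (F := fun ω => ((f ω, ()), g ω)) (G := fun ω => (f ω, g ω)) (by simp),
    H2_marg_congr P (F := fun ω => (f ω, ())) (G := f) (by simp),
    H2_marg_congr P (F := fun ω => (g ω, ())) (G := g) (by simp)] at h

end Submodular

lemma Finset.restrict_eq_restrict_iff {ι : Type*} {α : ι → Type*} {s : Finset ι}
    {f g : ∀ i, α i} : s.restrict f = s.restrict g ↔ ∀ i ∈ s, f i = g i := by
  simp [funext_iff]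

section Restrict

variable {Ω ι β : Type*} {α : ι → Type*} [Fintype Ω] [Fintype β] [∀ i, Fintype (α i)]
  [DecidableEq ι] {P : Ω → ℝ}

lemma H2_marg_restrict_union_le_add (hP0 : ∀ ω, 0 ≤ P ω) (hP1 : ∑ ω, P ω = 1)
    (Z : Ω → β) (X : Ω → ∀ i, α i) (s t : Finset ι) :
    H2 (marg P fun ω => (Z ω, (s ∪ t).restrict (X ω)))
      ≤ H2 (marg P fun ω => (Z ω, s.restrict (X ω)))
        + H2 (marg P fun ω => t.restrict (X ω)) := by
  refine (H2_marg_congr P fun ω ω' => ?_).trans_le (H2_marg_pair_le_add hP0 hP1 _ _)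
  simp only [Prod.ext_iff, Finset.restrict_eq_restrict_iff, Finset.mem_union]
  grind

lemma H2_marg_restrict_submodular (hP0 : ∀ ω, 0 ≤ P ω) (hP1 : ∑ ω, P ω = 1)
    (Z : Ω → β) (X : Ω → ∀ i, α i) (s t : Finset ι) :
    H2 (marg P fun ω => (Z ω, (s ∪ t).restrict (X ω)))
        + H2 (marg P fun ω => (Z ω, (s ∩ t).restrict (X ω)))
      ≤ H2 (marg P fun ω => (Z ω, s.restrict (X ω)))
        + H2 (marg P fun ω => (Z ω, t.restrict (X ω))) := by
  have key := H2_marg_submodular hP0 hP1 (fun ω => (s \ t).restrict (X ω))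
    (fun ω => (t \ s).restrict (X ω)) (fun ω => (Z ω, (s ∩ t).restrict (X ω)))
  have hunion : H2 (marg P fun ω => (((s \ t).restrict (X ω), (Z ω, (s ∩ t).restrict (X ω))),
      (t \ s).restrict (X ω))) = H2 (marg P fun ω => (Z ω, (s ∪ t).restrict (X ω))) :=
    H2_marg_congr P fun ω ω' => by
      simp only [Prod.ext_iff, Finset.restrict_eq_restrict_iff, Finset.mem_sdiff,
        Finset.mem_inter, Finset.mem_union]
      grind
  have hleft : H2 (marg P fun ω => ((s \ t).restrict (X ω), (Z ω, (s ∩ t).restrict (X ω))))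
      = H2 (marg P fun ω => (Z ω, s.restrict (X ω))) :=
    H2_marg_congr P fun ω ω' => by
      simp only [Prod.ext_iff, Finset.restrict_eq_restrict_iff, Finset.mem_sdiff,
        Finset.mem_inter]
      grind
  have hright : H2 (marg P fun ω => ((t \ s).restrict (X ω), (Z ω, (s ∩ t).restrict (X ω))))
      = H2 (marg P fun ω => (Z ω, t.restrict (X ω))) :=
    H2_marg_congr P fun ω ω' => by
      simp only [Prod.ext_iff, Finset.restrict_eq_restrict_iff, Finset.mem_sdiff,
        Finset.mem_inter]
      grind
  rwa [hunion, hleft, hright] at key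

end Restrict

section Product

variable {ι : Type*} [Fintype ι] [DecidableEq ι] {κ : ι → Type*} [∀ i, Fintype (κ i)]

lemma marg_pi_restrict {p : ∀ i, κ i → ℝ} (hp : ∀ i, ∑ a, p i a = 1) (S : Finset ι)
    (x : ∀ i, κ i) :
    marg (fun v => ∏ i, p i (v i)) S.restrict (S.restrict x) = ∏ i ∈ S, p i (x i) := by
  classical
  let g : ∀ i, κ i → ℝ := fun i a => if i ∈ S ∧ a ≠ x i then 0 else p i a
  calc marg (fun v => ∏ i, p i (v i)) S.restrict (S.restrict x)
      = ∑ v : ∀ i, κ i, ∏ i, g i (v i) := Finset.sum_congr rfl fun v _ => by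
        by_cases hv : ∀ i ∈ S, v i = x i
        · rw [if_pos (Finset.restrict_eq_restrict_iff.2 hv)]
          exact Finset.prod_congr rfl fun i _ => (if_neg fun h => h.2 (hv i h.1)).symm
        · obtain ⟨i, hiS, hi⟩ := not_forall₂.1 hv
          rw [if_neg fun h => hi (Finset.restrict_eq_restrict_iff.1 h i hiS)]
          exact (Finset.prod_eq_zero (f := fun i => g i (v i)) (Finset.mem_univ i)
            (if_pos ⟨hiS, hi⟩)).symm
    _ = ∏ i, ∑ a, g i a := (Finset.prod_univ_sum _ _).symm
    _ = ∏ i, if i ∈ S then p i (x i) else 1 := Finset.prod_congr rfl fun i _ => by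
        by_cases hi : i ∈ S <;> simp [g, hi, hp]
    _ = ∏ i ∈ S, p i (x i) := by rw [Finset.prod_ite_mem, Finset.univ_inter]

end Product

section MAC

variable {m : ℕ} {𝒳 : Fin m → Type*} {Y : Type*} [Fintype Y]
  {p : ∀ i, 𝒳 i → ℝ} {W : (∀ i, 𝒳 i) → Y → ℝ}

lemma macJoint_nonneg (hp : ∀ i x, 0 ≤ p i x) (hW : IsChannel W) (q : (∀ i, 𝒳 i) × Y) :
    0 ≤ macJoint p W q :=
  mul_nonneg (Finset.prod_nonneg fun i _ => hp i _) (hW.1 _ _)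

variable [∀ i, Fintype (𝒳 i)]

lemma marg_macJoint_fst (hW : ∀ x, ∑ y, W x y = 1) :
    marg (macJoint p W) Prod.fst = fun x => ∏ i, p i (x i) := by
  classical
  ext x
  simp [marg, macJoint, Fintype.sum_prod_type, ← Finset.mul_sum, hW]

lemma sum_macJoint (hp : ∀ i, ∑ a, p i a = 1) (hW : ∀ x, ∑ y, W x y = 1) :
    ∑ q, macJoint p W q = 1 := by
  rw [← sum_marg _ Prod.fst, marg_macJoint_fst hW, ← Fintype.prod_sum]
  simp [hp]

lemma marg_macJoint_restrict (hp : ∀ i, ∑ a, p i a = 1) (hW : ∀ x, ∑ y, W x y = 1)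
    (S : Finset (Fin m)) (q : (∀ i, 𝒳 i) × Y) :
    marg (macJoint p W) (fun q => S.restrict q.1) (S.restrict q.1) = ∏ i ∈ S, p i (q.1 i) := by
  rw [marg_comp _ Prod.fst S.restrict, marg_macJoint_fst hW, marg_pi_restrict hp]

lemma marg_macJoint_apply (hp : ∀ i, ∑ a, p i a = 1) (hW : ∀ x, ∑ y, W x y = 1)
    (i : Fin m) (q : (∀ i, 𝒳 i) × Y) :
    marg (macJoint p W) (fun q => q.1 i) (q.1 i) = p i (q.1 i) := by
  rw [marg_apply_congr _ (G := fun q => ({i} : Finset (Fin m)).restrict q.1) fun q' => by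
    simp [Finset.restrict_eq_restrict_iff], marg_macJoint_restrict hp hW, Finset.prod_singleton]

lemma H2_marg_macJoint_restrict_eq_sum (hp : ∀ i, ∑ a, p i a = 1) (hW : ∀ x, ∑ y, W x y = 1)
    (S : Finset (Fin m)) :
    H2 (marg (macJoint p W) fun q => S.restrict q.1)
      = ∑ i ∈ S, H2 (marg (macJoint p W) fun q => q.1 i) := by
  simp only [H2_marg_eq, marg_macJoint_restrict hp hW, marg_macJoint_apply hp hW,
    Finset.sum_neg_distrib]
  rw [Finset.sum_comm]
  congr 1
  refine Finset.sum_congr rfl fun q _ => ?_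
  rcases eq_or_ne (macJoint p W q) 0 with hq | hq
  · simp [hq]
  have hprod : ∀ i ∈ S, p i (q.1 i) ≠ 0 := fun i _ =>
    Finset.prod_ne_zero_iff.1 (left_ne_zero_of_mul hq) i (Finset.mem_univ i)
  rw [logb_prod _ _ hprod, Finset.mul_sum]

lemma macRho_eq (hp : ∀ i, ∑ a, p i a = 1) (hW : ∀ x, ∑ y, W x y = 1) (S : Finset (Fin m)) :
    macRho p W S = ∑ i ∈ S, H2 (marg (macJoint p W) fun q => q.1 i)
      + H2 (marg (macJoint p W) fun q => (q.2, Sᶜ.restrict q.1)) - H2 (macJoint p W) := by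
  have hinj : Function.Injective fun q : (∀ i, 𝒳 i) × Y =>
      (S.restrict q.1, (q.2, Sᶜ.restrict q.1)) := by
    intro q q' h
    simp only [Prod.ext_iff, Finset.restrict_eq_restrict_iff, Finset.mem_compl] at h
    exact Prod.ext (funext fun i => by by_cases hi : i ∈ S <;> simp [h.1 i, h.2.2 i, hi]) h.2.1
  rw [← H2_marg_macJoint_restrict_eq_sum hp hW, ← H2_marg_of_injective _ hinj]
  rfl

lemma macRho_empty (hp : ∀ i, ∑ a, p i a = 1) (hW : ∀ x, ∑ y, W x y = 1) :
    macRho p W ∅ = 0 := by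
  have hinj : Function.Injective fun q : (∀ i, 𝒳 i) × Y =>
      (q.2, (∅ᶜ : Finset (Fin m)).restrict q.1) := by
    intro q q' h
    simp only [Prod.ext_iff, Finset.restrict_eq_restrict_iff] at h
    exact Prod.ext (funext fun i => h.2 i (by simp)) h.1
  rw [macRho_eq hp hW, Finset.sum_empty, H2_marg_of_injective _ hinj]
  ring

lemma macRho_mono (hp0 : ∀ i x, 0 ≤ p i x) (hp1 : ∀ i, ∑ a, p i a = 1) (hW : IsChannel W)
    {J K : Finset (Fin m)} (hJK : J ⊆ K) : macRho p W J ≤ macRho p W K := by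
  have hsplit : Jᶜ = Kᶜ ∪ (K \ J) := by
    ext i
    have := @hJK i
    simp only [Finset.mem_compl, Finset.mem_union, Finset.mem_sdiff]
    tauto
  have key := H2_marg_restrict_union_le_add (macJoint_nonneg hp0 hW) (sum_macJoint hp1 hW.2)
    Prod.snd Prod.fst Kᶜ (K \ J)
  rw [← hsplit, H2_marg_macJoint_restrict_eq_sum hp1 hW.2] at key
  rw [macRho_eq hp1 hW.2, macRho_eq hp1 hW.2, ← Finset.sum_sdiff hJK]
  linarith

lemma macRho_submodular (hp0 : ∀ i x, 0 ≤ p i x) (hp1 : ∀ i, ∑ a, p i a = 1)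
    (hW : IsChannel W) (J K : Finset (Fin m)) :
    macRho p W (J ∪ K) + macRho p W (J ∩ K) ≤ macRho p W J + macRho p W K := by
  have key := H2_marg_restrict_submodular (macJoint_nonneg hp0 hW) (sum_macJoint hp1 hW.2)
    Prod.snd Prod.fst Jᶜ Kᶜ
  rw [← Finset.compl_inter, ← Finset.compl_union] at key
  simp only [macRho_eq hp1 hW.2]
  linarith [Finset.sum_union_inter (s₁ := J) (s₂ := K)
    (f := fun i => H2 (marg (macJoint p W) fun q => q.1 i))]

end MAC

theorem statement5 {m : ℕ} {𝒳 : Fin m → Type*} [∀ i, Fintype (𝒳 i)] {Y : Type*}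
    [Fintype Y] (p : ∀ i, 𝒳 i → ℝ)
    (hp : ∀ i, (∀ x, 0 ≤ p i x) ∧ ∑ x, p i x = 1)
    (W : (∀ i, 𝒳 i) → Y → ℝ) (hW : IsChannel W) :
    macRho p W ∅ = 0 ∧
    (∀ J K : Finset (Fin m), J ⊆ K → macRho p W J ≤ macRho p W K) ∧
    (∀ J K : Finset (Fin m),
      macRho p W (J ∪ K) + macRho p W (J ∩ K) ≤ macRho p W J + macRho p W K) := by
  have hp0 i := (hp i).1
  have hp1 i := (hp i).2
  exact ⟨macRho_empty hp1 hW.2, fun _ _ => macRho_mono hp0 hp1 hW,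
    macRho_submodular hp0 hp1 hW⟩
end

section
/- Let f be the rank function of a matroid on the ground set E_m = {1,…,m}. Then every extreme point (vertex) of the polytope {(R_1,…,R_m) ∈ ℝ^m : R_i ≥ 0 for all i, and Σ_{i∈J} R_i ≤ f(J) for all J ⊆ E_m} lies in {0,1}^m. -/
/-!
If a coordinate of an extreme point `x` is not an integer, we find a direction `d ≠ 0`,
vanishing where `x` does, with `∑ i ∈ J, d i = 0` for every tight set `J`
(one with `∑ i ∈ J, x i = f J`); then `x ± t • d` stays in the polytope for small `t`,
so `x` is not extreme. By submodularity, tight sets are closed under intersection. If no tight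
set contains a fractional coordinate `k`, take `d = e_k`. Otherwise an inclusion-minimal tight
set `J` containing a fractional coordinate `b` contains a second one `j`, because `f J` is an
integer; by minimality every tight set contains `b` iff it contains `j`, and `d = e_b - e_j`.
Finally an integral point of the polytope is `0/1` since `x i ≤ f {i} ≤ 1`.
-/

open Finset Filter Topology

theorem notMem_extremePoints_of_eventually_add_smul_mem {E : Type*} [AddCommGroup E]
    [Module ℝ E] {S : Set E} {x d : E} (hd : d ≠ 0)
    (h : ∀ᶠ t in 𝓝 (0 : ℝ), x + t • d ∈ S) : x ∉ S.extremePoints ℝ := by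
  have hneg : ∀ᶠ t in 𝓝 (0 : ℝ), x - t • d ∈ S := by
    simpa [sub_eq_add_neg] using (continuous_neg.tendsto' (0 : ℝ) 0 neg_zero).eventually h
  obtain ⟨t, ht, hplus, hminus⟩ : ∃ t : ℝ, t ≠ 0 ∧ x + t • d ∈ S ∧ x - t • d ∈ S :=
    ((eventually_mem_nhdsWithin (a := (0 : ℝ)) (s := {0}ᶜ)).and
      (nhdsWithin_le_nhds (h.and hneg))).exists
  intro hx
  have := (mem_extremePoints.1 hx).2 _ hplus _ hminus (mem_openSegment_add_sub x (t • d))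
  exact smul_ne_zero ht hd (by simpa using this.1)

theorem eventually_add_mul_le {u v c : ℝ} (hu : u ≤ c) (htight : u = c → v = 0) :
    ∀ᶠ t in 𝓝 (0 : ℝ), u + t * v ≤ c := by
  rcases hu.lt_or_eq with hlt | rfl
  · have : Tendsto (fun t : ℝ => u + t * v) (𝓝 0) (𝓝 u) := by
      simpa using (tendsto_const_nhds (x := u)).add ((tendsto_id (x := 𝓝 (0 : ℝ))).mul_const v)
    exact this.eventually (eventually_le_nhds hlt)
  · simp [htight rfl]

variable {α : Type*}

def polymatroidPolytope [Fintype α] (f : Finset α → ℝ) : Set (α → ℝ) :=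
  {R | (∀ i, 0 ≤ R i) ∧ ∀ J, ∑ i ∈ J, R i ≤ f J}

def IsTight (f : Finset α → ℝ) (x : α → ℝ) (J : Finset α) : Prop :=
  ∑ i ∈ J, x i = f J

theorem eventually_add_smul_mem_polymatroidPolytope [Fintype α] {f : Finset α → ℝ}
    {x d : α → ℝ} (hx : x ∈ polymatroidPolytope f) (hd0 : ∀ i, x i = 0 → d i = 0)
    (hd : ∀ J, IsTight f x J → ∑ i ∈ J, d i = 0) :
    ∀ᶠ t in 𝓝 (0 : ℝ), x + t • d ∈ polymatroidPolytope f := by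
  have hnonneg : ∀ i, ∀ᶠ t in 𝓝 (0 : ℝ), 0 ≤ x i + t * d i := fun i =>
    (eventually_add_mul_le (u := -x i) (v := -d i) (c := 0) (by linarith [hx.1 i])
      fun h => by simp [hd0 i (neg_eq_zero.1 h)]).mono fun t ht => by linarith
  have hsum : ∀ J, ∀ᶠ t in 𝓝 (0 : ℝ), ∑ i ∈ J, x i + t * ∑ i ∈ J, d i ≤ f J := fun J =>
    eventually_add_mul_le (hx.2 J) (hd J)
  filter_upwards [eventually_all.2 hnonneg, eventually_all.2 hsum] with t ht₁ ht₂
  refine ⟨ht₁, fun J => ?_⟩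
  simpa [sum_add_distrib, mul_sum] using ht₂ J

theorem IsTight.inter [Fintype α] [DecidableEq α] {f : Finset α → ℝ} {x : α → ℝ}
    (hsub : ∀ J K, f (J ∪ K) + f (J ∩ K) ≤ f J + f K) (hx : x ∈ polymatroidPolytope f)
    {J K : Finset α} (hJ : IsTight f x J) (hK : IsTight f x K) : IsTight f x (J ∩ K) := by
  have := sum_union_inter (s₁ := J) (s₂ := K) (f := x)
  unfold IsTight at *
  linarith [hx.2 (J ∪ K), hx.2 (J ∩ K), hsub J K]

theorem IsTight.exists_ne_notMem_range [DecidableEq α] {f : Finset α → ℝ} {x : α → ℝ}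
    {J : Finset α} (hJ : IsTight f x J) (hfJ : f J ∈ (Int.castAddHom ℝ).range) {b : α}
    (hbJ : b ∈ J) (hb : x b ∉ (Int.castAddHom ℝ).range) :
    ∃ j ∈ J, j ≠ b ∧ x j ∉ (Int.castAddHom ℝ).range := by
  by_contra! h
  refine hb ?_
  rw [show x b = f J - ∑ i ∈ J.erase b, x i by rw [← hJ, ← add_sum_erase J x hbJ]; ring]
  exact sub_mem hfJ (sum_mem fun i hi => h i (mem_of_mem_erase hi) (ne_of_mem_erase hi))

theorem subset_of_minimal_isTight [Fintype α] [DecidableEq α] {f : Finset α → ℝ} {x : α → ℝ}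
    (hsub : ∀ J K, f (J ∪ K) + f (J ∩ K) ≤ f J + f K) (hx : x ∈ polymatroidPolytope f)
    {J : Finset α}
    (hJ : Minimal (fun K => IsTight f x K ∧ ∃ k ∈ K, x k ∉ (Int.castAddHom ℝ).range) J)
    {b : α} (hbJ : b ∈ J) (hb : x b ∉ (Int.castAddHom ℝ).range)
    {K : Finset α} (hK : IsTight f x K) (hbK : b ∈ K) : J ⊆ K :=
  (hJ.le_of_le ⟨hJ.1.1.inter hsub hx hK, b, mem_inter.2 ⟨hbJ, hbK⟩, hb⟩
    inter_subset_left).trans inter_subset_right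

theorem exists_direction_preserving_tight_sets [Fintype α] [DecidableEq α]
    {f : Finset α → ℝ} {x : α → ℝ}
    (hsub : ∀ J K, f (J ∪ K) + f (J ∩ K) ≤ f J + f K)
    (hfint : ∀ J, f J ∈ (Int.castAddHom ℝ).range) (hx : x ∈ polymatroidPolytope f)
    {k : α} (hk : x k ∉ (Int.castAddHom ℝ).range) :
    ∃ d : α → ℝ, d ≠ 0 ∧ (∀ i, x i = 0 → d i = 0) ∧
      ∀ J, IsTight f x J → ∑ i ∈ J, d i = 0 := by
  have hne : ∀ {i}, x i ∉ (Int.castAddHom ℝ).range → x i ≠ 0 := fun hi h0 =>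
    hi (h0 ▸ zero_mem _)
  by_cases h : ∃ J, IsTight f x J ∧ ∃ k ∈ J, x k ∉ (Int.castAddHom ℝ).range
  · obtain ⟨J, hJ⟩ := exists_minimal_of_wellFoundedLT _ h
    obtain ⟨b, hbJ, hb⟩ := hJ.1.2
    obtain ⟨j, hjJ, hjb, hj⟩ := hJ.1.1.exists_ne_notMem_range (hfint J) hbJ hb
    refine ⟨Pi.single b 1 - Pi.single j 1, fun h => ?_, fun i hi => ?_, fun K hK => ?_⟩
    · simpa [hjb.symm] using congrFun h b
    · have hib : i ≠ b := by rintro rfl; exact hne hb hi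
      have hij : i ≠ j := by rintro rfl; exact hne hj hi
      simp [hib, hij]
    · have hbj : b ∈ K ↔ j ∈ K :=
        ⟨fun hbK => subset_of_minimal_isTight hsub hx hJ hbJ hb hK hbK hjJ,
          fun hjK => subset_of_minimal_isTight hsub hx hJ hjJ hj hK hjK hbJ⟩
      simp [sum_sub_distrib, sum_pi_single', hbj]
  · push Not at h
    refine ⟨Pi.single k 1, fun h => by simpa using congrFun h k, fun i hi => ?_, fun J hJ => ?_⟩
    · have hik : i ≠ k := by rintro rfl; exact hne hk hi
      simp [hik]
    · have hkJ : k ∉ J := fun hkJ => hk (h J hJ k hkJ)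
      simp [sum_pi_single', hkJ]

theorem statement7_general {m : ℕ} (f : Finset (Fin m) → ℤ)
    (hsub : ∀ J K : Finset (Fin m), f (J ∪ K) + f (J ∩ K) ≤ f J + f K)
    (hcard : ∀ J : Finset (Fin m), f J ≤ J.card) :
    ∀ x ∈ Set.extremePoints ℝ
        {R : Fin m → ℝ | (∀ i, 0 ≤ R i) ∧
          ∀ J : Finset (Fin m), ∑ i ∈ J, R i ≤ (f J : ℝ)},
      ∀ i, x i = 0 ∨ x i = 1 := by
  intro x hx i
  have hxP : x ∈ polymatroidPolytope (fun J => (f J : ℝ)) := hx.1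
  obtain ⟨n, hn⟩ : x i ∈ (Int.castAddHom ℝ).range := by
    by_contra hi
    obtain ⟨d, hd, hd0, hdJ⟩ :=
      exists_direction_preserving_tight_sets (f := fun J => (f J : ℝ))
        (fun J K => by exact_mod_cast hsub J K) (fun J => ⟨f J, rfl⟩) hxP hi
    exact notMem_extremePoints_of_eventually_add_smul_mem hd
      (eventually_add_smul_mem_polymatroidPolytope hxP hd0 hdJ) hx
  replace hn : (n : ℝ) = x i := hn
  have hn0 : (0 : ℝ) ≤ n := hn ▸ hxP.1 i
  have hn1 : (n : ℝ) ≤ 1 := by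
    have hsingle : (n : ℝ) ≤ f {i} := by simpa [hn] using hxP.2 {i}
    exact hsingle.trans (by exact_mod_cast hcard {i})
  norm_cast at hn0 hn1
  rcases (by omega : n = 0 ∨ n = 1) with rfl | rfl <;> simp [← hn]

theorem statement7 {m : ℕ} (f : Finset (Fin m) → ℤ)
    (h0 : f ∅ = 0)
    (hmono : ∀ J K : Finset (Fin m), J ⊆ K → f J ≤ f K)
    (hsub : ∀ J K : Finset (Fin m), f (J ∪ K) + f (J ∩ K) ≤ f J + f K)
    (hcard : ∀ J : Finset (Fin m), f J ≤ J.card) :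
    ∀ x ∈ Set.extremePoints ℝ
        {R : Fin m → ℝ | (∀ i, 0 ≤ R i) ∧
          ∀ J : Finset (Fin m), ∑ i ∈ J, R i ≤ (f J : ℝ)},
      ∀ i, x i = 0 ∨ x i = 1 :=
  statement7_general f hsub hcard
end
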